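/- arXiv:0912.2458 — 9 statements merged into one kernel-verified Lean document; each statement's English description precedes it below -/
import Mathlib

section
/- Let p be a prime and q a positive integer. If there exist distinct positive integers x₁ and x₂ such that q/p = 1/x₁ + 1/x₂, then p + 1 ≡ 0 (mod q), i.e., q divides p + 1. -/
theorem aux_0 (p q x₁ x₂ : ℕ) (hp : p.Prime) (hq : 0 < q)
    (hx₁ : 0 < x₁) (hx₂ : 0 < x₂) (hlt : x₁ < x₂)
    (heq : q * (x₁ * x₂) = p * (x₁ + x₂)) :
    q ∣ p + 1 := by
  obtain ⟨a, ha⟩ := Nat.gcd_dvd_left x₁ x₂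
  obtain ⟨b, hb⟩ := Nat.gcd_dvd_right x₁ x₂
  set d := Nat.gcd x₁ x₂ with hd
  have hd0 : 0 < d := Nat.gcd_pos_of_pos_left _ hx₁
  have hab : Nat.Coprime a b := by
    have hA : x₁ / d = a := by rw [ha]; exact Nat.mul_div_cancel_left _ hd0
    have hB : x₂ / d = b := by rw [hb]; exact Nat.mul_div_cancel_left _ hd0
    have := Nat.coprime_div_gcd_div_gcd (m := x₁) (n := x₂) hd0
    rwa [hA, hB] at this
  have ha0 : 0 < a := by
    rcases Nat.eq_zero_or_pos a with h | h
    · simp [h] at ha; omega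
    · exact h
  have hb0 : 0 < b := by
    rcases Nat.eq_zero_or_pos b with h | h
    · simp [h] at hb; omega
    · exact h
  have hab_lt : a < b := by
    rw [ha, hb] at hlt
    exact lt_of_mul_lt_mul_left hlt (Nat.zero_le d)
  -- key equation: q * d * (a * b) = p * (a + b)
  have key : q * d * (a * b) = p * (a + b) := by
    have : (q * d * (a * b)) * d = (p * (a + b)) * d := by
      rw [ha, hb] at heq; ring_nf; ring_nf at heq; linarith [heq]
    exact Nat.eq_of_mul_eq_mul_right hd0 this
  have hcop : Nat.Coprime (a * b) (a + b) := by
    have h1 : Nat.Coprime a (a + b) := by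
      simpa [Nat.coprime_add_self_right] using hab
    have h2 : Nat.Coprime b (a + b) := by
      simpa [Nat.coprime_add_self_left] using hab.symm
    exact h1.mul h2
  have hdvd : a * b ∣ p := by
    have : a * b ∣ p * (a + b) := ⟨q * d, by linarith [key]⟩
    exact (Nat.Coprime.dvd_of_dvd_mul_right hcop) this
  have hab1 : a * b = 1 ∨ a * b = p := (Nat.dvd_prime hp).1 hdvd
  rcases hab1 with h | h
  · nlinarith
  · -- a = 1, b = p
    have ha1 : a = 1 := by
      have hadvd : a ∣ p := ⟨b, h.symm⟩
      rcases (Nat.dvd_prime hp).1 hadvd with h1 | h1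
      · exact h1
      · exfalso; rw [h1] at h; nlinarith [hp.two_le]
    have hbp : b = p := by rw [ha1] at h; omega
    rw [ha1, hbp, one_mul] at key
    have : q * d = p + 1 := by
      have hp0 : 0 < p := hp.pos
      have : (q * d) * p = (p + 1) * p := by ring_nf; ring_nf at key; linarith
      exact Nat.eq_of_mul_eq_mul_right hp0 this
    exact ⟨d, this.symm⟩

theorem nat_eq_of_rat (p q x₁ x₂ : ℕ) (hp : 0 < p) (hx₁ : 0 < x₁) (hx₂ : 0 < x₂)
    (heq : (q : ℚ) / p = 1 / x₁ + 1 / x₂) :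
    q * (x₁ * x₂) = p * (x₁ + x₂) := by
  have h1 : (x₁ : ℚ) ≠ 0 := by positivity
  have h2 : (x₂ : ℚ) ≠ 0 := by positivity
  have h3 : (p : ℚ) ≠ 0 := by positivity
  field_simp at heq
  have : ((q * (x₁ * x₂) : ℕ) : ℚ) = ((p * (x₁ + x₂) : ℕ) : ℚ) := by push_cast; linarith
  exact_mod_cast this

theorem stmt_0 (p q x₁ x₂ : ℕ) (hp : p.Prime) (hq : 0 < q)
    (hx₁ : 0 < x₁) (hx₂ : 0 < x₂) (hne : x₁ ≠ x₂)
    (heq : (q : ℚ) / p = 1 / x₁ + 1 / x₂) :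
    q ∣ p + 1 := by
  have key := nat_eq_of_rat p q x₁ x₂ hp.pos hx₁ hx₂ heq
  rcases lt_or_gt_of_ne hne with h | h
  · exact aux_0 p q x₁ x₂ hp hq hx₁ hx₂ h key
  · exact aux_0 p q x₂ x₁ hp hq hx₂ hx₁ h (by linarith [key])
end

section
/- Let p be a prime and q a positive integer, and suppose distinct positive integers x₁ and x₂ satisfy q/p = 1/x₁ + 1/x₂. Then the solution is unique up to order: {x₁, x₂} = {(p+1)/q, p·(p+1)/q}. -/
/-!
After clearing denominators, `u = q x₁` and `v = q x₂` satisfy `u v = p (u + v)`, that is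
`(u - p)(v - p) = p²`. Both factors are positive, and as `u ≠ v` they are `1` and `p²`,
so `{q x₁, q x₂} = {p + 1, p (p + 1)}`.
-/

lemma lt_of_mul_eq_mul_add {p u v : ℕ} (hp : 0 < p) (hu : 0 < u) (h : u * v = p * (u + v)) :
    p < v := by
  by_contra! hv
  nlinarith [Nat.mul_le_mul_left u hv]

lemma Nat.Prime.eq_of_mul_eq_mul_add {p u v : ℕ} (hp : p.Prime) (hu : 0 < u) (hv : 0 < v)
    (huv : u ≠ v) (h : u * v = p * (u + v)) :
    (u = p + 1 ∧ v = p * (p + 1)) ∨ (u = p * (p + 1) ∧ v = p + 1) := by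
  have hvu : v * u = p * (v + u) := by rw [mul_comm, add_comm, h]
  obtain ⟨a, rfl⟩ := Nat.exists_eq_add_of_lt (lt_of_mul_eq_mul_add hp.pos hv hvu)
  obtain ⟨b, rfl⟩ := Nat.exists_eq_add_of_lt (lt_of_mul_eq_mul_add hp.pos hu h)
  have hab : (a + 1) * (b + 1) = p ^ 2 := by nlinarith
  by_cases ha : a + 1 = 1
  · left
    constructor <;> nlinarith
  by_cases hb : b + 1 = 1
  · right
    constructor <;> nlinarith
  obtain ⟨hap, hbp⟩ := (hp.mul_eq_prime_sq_iff ha hb).1 hab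
  exact absurd (by omega) huv

lemma eq_div_and_eq_mul_div {p q x₁ x₂ : ℕ} (hq : 0 < q) (h₁ : q * x₁ = p + 1)
    (h₂ : q * x₂ = p * (p + 1)) : x₁ = (p + 1) / q ∧ x₂ = p * ((p + 1) / q) := by
  have hx₁ : x₁ = (p + 1) / q := by rw [← h₁, Nat.mul_div_cancel_left _ hq]
  refine ⟨hx₁, ?_⟩
  rw [← hx₁]
  exact Nat.eq_of_mul_eq_mul_left hq (by rw [h₂, ← h₁]; ring)

theorem stmt_1 (p q x₁ x₂ : ℕ) (hp : p.Prime) (hq : 0 < q)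
    (hx₁ : 0 < x₁) (hx₂ : 0 < x₂) (hne : x₁ ≠ x₂)
    (heq : (q : ℚ) / p = 1 / x₁ + 1 / x₂) :
    (x₁ = (p + 1) / q ∧ x₂ = p * ((p + 1) / q)) ∨
    (x₁ = p * ((p + 1) / q) ∧ x₂ = (p + 1) / q) := by
  have hnat : q * x₁ * (q * x₂) = p * (q * x₁ + q * x₂) := by
    have hp₀ : (p : ℚ) ≠ 0 := by exact_mod_cast hp.ne_zero
    field_simp at heq
    have hrat : (q * x₁ * (q * x₂) : ℚ) = p * (q * x₁ + q * x₂) := by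
      linear_combination q * heq
    exact_mod_cast hrat
  have hqx : q * x₁ ≠ q * x₂ := fun h => hne (Nat.eq_of_mul_eq_mul_left hq h)
  rcases hp.eq_of_mul_eq_mul_add (by positivity) (by positivity) hqx hnat with h | h
  · exact .inl (eq_div_and_eq_mul_div hq h.1 h.2)
  · exact .inr (eq_div_and_eq_mul_div hq h.2 h.1).symm
end

section
/- Let n ≥ 3 be a natural number. If the equation 4/n = 1/x₁ + 1/x₂ + 1/x₃ has no solution in pairwise distinct positive integers x₁, x₂, x₃, then every prime divisor p of n satisfies p ≡ 1 (mod 24). -/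
set_option maxHeartbeats 1000000

theorem stmt_3 (n : ℕ) (hn : 3 ≤ n)
    (h : ¬ ∃ x₁ x₂ x₃ : ℕ, 0 < x₁ ∧ 0 < x₂ ∧ 0 < x₃ ∧
      x₁ ≠ x₂ ∧ x₂ ≠ x₃ ∧ x₁ ≠ x₃ ∧
      (4 : ℚ) / n = 1 / x₁ + 1 / x₂ + 1 / x₃) :
    ∀ p : ℕ, p.Prime → p ∣ n → p % 24 = 1 := by
  intro p hp hpn
  by_contra hr
  apply h
  obtain ⟨m, hm⟩ := hpn
  have hp2 := hp.two_le
  have hm1 : 1 ≤ m := by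
    rcases Nat.eq_zero_or_pos m with h0 | h1
    · rw [h0, mul_zero] at hm; omega
    · exact h1
  have hMq : (1:ℚ) ≤ (m:ℚ) := by exact_mod_cast hm1
  have hM0 : (m:ℚ) ≠ 0 := by positivity
  by_cases hp2' : p = 2
  · subst hp2'
    have hm2 : 2 ≤ m := by omega
    rcases Nat.even_or_odd m with ⟨j, hj⟩ | ⟨j, hj⟩
    · -- n = 4j, j ≥ 1
      have hj1 : 1 ≤ j := by omega
      refine ⟨2*j, 3*j, 6*j, by omega, by omega, by omega, by omega, by omega, by omega, ?_⟩
      have hnq : (n:ℚ) = 4*(j:ℚ) := by rw [hm, hj]; push_cast; ring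
      have hJ : (1:ℚ) ≤ (j:ℚ) := by exact_mod_cast hj1
      have hJ0 : (j:ℚ) ≠ 0 := by positivity
      rw [hnq]; push_cast; field_simp; ring
    · -- m = 2j+1, j ≥ 1, n = 4j+2
      have hj1 : 1 ≤ j := by omega
      have hyj : j < (2*j+1)*(j+1) := by nlinarith
      have hy2 : 2 ≤ (2*j+1)*(j+1) := by nlinarith
      have hyc : (2*j+1)*(j+1)+1 < ((2*j+1)*(j+1))*((2*j+1)*(j+1)+1) := by nlinarith
      refine ⟨j+1, (2*j+1)*(j+1)+1, ((2*j+1)*(j+1))*((2*j+1)*(j+1)+1),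
        by omega, by omega, by nlinarith, by omega, by omega, by omega, ?_⟩
      have hnq : (n:ℚ) = 4*(j:ℚ)+2 := by rw [hm, hj]; push_cast; ring
      have hJ : (1:ℚ) ≤ (j:ℚ) := by exact_mod_cast hj1
      have h1 : (j:ℚ)+1 ≠ 0 := by positivity
      have h2 : (2*(j:ℚ)+1)*((j:ℚ)+1) ≠ 0 := by positivity
      have h3 : (2*(j:ℚ)+1)*((j:ℚ)+1)+1 ≠ 0 := by positivity
      have h4 : (4:ℚ)*(j:ℚ)+2 ≠ 0 := by positivity
      rw [hnq]; push_cast; field_simp; ring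
  · by_cases hp3' : p = 3
    · subst hp3'
      refine ⟨m, 4*m, 12*m, by omega, by omega, by omega, by omega, by omega, by omega, ?_⟩
      have hnq : (n:ℚ) = 3*(m:ℚ) := by rw [hm]; push_cast; ring
      rw [hnq]; push_cast; field_simp; ring
    · -- p ≥ 5 odd, not divisible by 3
      have hodd : p % 2 = 1 := by
        have : ¬ (2 ∣ p) := fun hd => hp2' ((Nat.prime_dvd_prime_iff_eq Nat.prime_two hp).mp hd).symm
        omega
      have h3nd : p % 3 ≠ 0 := by
        intro h0
        have : (3:ℕ) ∣ p := by omega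
        exact hp3' ((Nat.prime_dvd_prime_iff_eq Nat.prime_three hp).mp this).symm
      have hcase : p % 4 = 3 ∨ p % 3 = 2 ∨ p % 8 = 5 := by omega
      rcases hcase with hc | hc | hc
      · -- p = 4k+3, k ≥ 1
        obtain ⟨k, hk⟩ : ∃ k, p = 4*k+3 := ⟨p/4, by omega⟩
        have hk1 : 1 ≤ k := by omega
        have hyk : k+1 < (4*k+3)*(k+1)+1 := by nlinarith
        have hy2 : (4*k+3)*(k+1)+1 < ((4*k+3)*(k+1))*((4*k+3)*(k+1)+1) := by nlinarith
        refine ⟨(k+1)*m, ((4*k+3)*(k+1)+1)*m, (((4*k+3)*(k+1))*((4*k+3)*(k+1)+1))*m,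
          Nat.mul_pos (by omega) hm1, Nat.mul_pos (by omega) hm1,
          Nat.mul_pos (by nlinarith) hm1,
          fun he => absurd (Nat.eq_of_mul_eq_mul_right hm1 he) (by omega),
          fun he => absurd (Nat.eq_of_mul_eq_mul_right hm1 he) (by omega),
          fun he => absurd (Nat.eq_of_mul_eq_mul_right hm1 he) (by omega), ?_⟩
        have hnq : (n:ℚ) = (4*(k:ℚ)+3)*(m:ℚ) := by rw [hm, hk]; push_cast; ring
        have hK : (1:ℚ) ≤ (k:ℚ) := by exact_mod_cast hk1
        have h1 : (k:ℚ)+1 ≠ 0 := by positivity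
        have h2 : (4*(k:ℚ)+3) ≠ 0 := by positivity
        have h3 : (4*(k:ℚ)+3)*((k:ℚ)+1)+1 ≠ 0 := by positivity
        rw [hnq]; push_cast; field_simp; ring
      · -- p = 3k+2, k ≥ 1
        obtain ⟨k, hk⟩ : ∃ k, p = 3*k+2 := ⟨p/3, by omega⟩
        have hk1 : 1 ≤ k := by omega
        have ho1 : k+1 < 3*k+2 := by omega
        have ho2 : 3*k+2 < (3*k+2)*(k+1) := by nlinarith
        refine ⟨(k+1)*m, (3*k+2)*m, ((3*k+2)*(k+1))*m,
          Nat.mul_pos (by omega) hm1, Nat.mul_pos (by omega) hm1,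
          Nat.mul_pos (by nlinarith) hm1,
          fun he => absurd (Nat.eq_of_mul_eq_mul_right hm1 he) (by omega),
          fun he => absurd (Nat.eq_of_mul_eq_mul_right hm1 he) (by omega),
          fun he => absurd (Nat.eq_of_mul_eq_mul_right hm1 he) (by omega), ?_⟩
        have hnq : (n:ℚ) = (3*(k:ℚ)+2)*(m:ℚ) := by rw [hm, hk]; push_cast; ring
        have hK : (1:ℚ) ≤ (k:ℚ) := by exact_mod_cast hk1
        have h1 : (k:ℚ)+1 ≠ 0 := by positivity
        have h2 : (3*(k:ℚ)+2) ≠ 0 := by positivity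
        rw [hnq]; push_cast; field_simp; ring
      · -- p = 8k+5, k ≥ 0
        obtain ⟨k, hk⟩ : ∃ k, p = 8*k+5 := ⟨p/8, by omega⟩
        have ho1 : 2*(k+1) < (k+1)*(8*k+5) := by nlinarith
        have ho2 : (k+1)*(8*k+5) < 2*(k+1)*(8*k+5) := by nlinarith
        refine ⟨2*(k+1)*m, ((k+1)*(8*k+5))*m, (2*(k+1)*(8*k+5))*m,
          Nat.mul_pos (by omega) hm1, Nat.mul_pos (by nlinarith) hm1,
          Nat.mul_pos (by nlinarith) hm1,
          fun he => absurd (Nat.eq_of_mul_eq_mul_right hm1 he) (by omega),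
          fun he => absurd (Nat.eq_of_mul_eq_mul_right hm1 he) (by omega),
          fun he => absurd (Nat.eq_of_mul_eq_mul_right hm1 he) (by omega), ?_⟩
        have hnq : (n:ℚ) = (8*(k:ℚ)+5)*(m:ℚ) := by rw [hm, hk]; push_cast; ring
        have hK : (0:ℚ) ≤ (k:ℚ) := by positivity
        have h1 : (k:ℚ)+1 ≠ 0 := by positivity
        have h2 : (8*(k:ℚ)+5) ≠ 0 := by positivity
        rw [hnq]; push_cast; field_simp; ring
end

section
/- Let n ≥ 3 be a natural number. If the equation 4/n = 1/x₁ + 1/x₂ + 1/x₃ has no solution in pairwise distinct positive integers x₁, x₂, x₃, then n ≡ 1 (mod 24). -/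
lemma key4 (n a b c : ℕ) (hn : 0 < n) (ha : 0 < a) (hb : 0 < b) (hc : 0 < c)
    (h : 4 * (a*b*c) = n * (b*c + a*c + a*b)) :
    (4:ℚ)/n = 1/a + 1/b + 1/c := by
  have hn' : (n:ℚ) ≠ 0 := Nat.cast_ne_zero.mpr hn.ne'
  have ha' : (a:ℚ) ≠ 0 := Nat.cast_ne_zero.mpr ha.ne'
  have hb' : (b:ℚ) ≠ 0 := Nat.cast_ne_zero.mpr hb.ne'
  have hc' : (c:ℚ) ≠ 0 := Nat.cast_ne_zero.mpr hc.ne'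
  have h' := congrArg (Nat.cast : ℕ → ℚ) h
  push_cast at h'
  field_simp
  linarith [h']

theorem stmt_4 (n : ℕ) (hn : 3 ≤ n)
    (h : ¬ ∃ x₁ x₂ x₃ : ℕ, 0 < x₁ ∧ 0 < x₂ ∧ 0 < x₃ ∧
      x₁ ≠ x₂ ∧ x₂ ≠ x₃ ∧ x₁ ≠ x₃ ∧
      (4 : ℚ) / n = 1 / x₁ + 1 / x₂ + 1 / x₃) :
    n % 24 = 1 := by
  have hn0 : 0 < n := by omega
  by_cases h2 : n % 2 = 0
  · -- n = 2m, m ≥ 2: (m, m+1, m*(m+1))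
    exfalso
    obtain ⟨m, rfl⟩ : ∃ m, n = 2 * m := ⟨n / 2, by omega⟩
    have hm : 2 ≤ m := by omega
    have hmul : 2 * (m+1) ≤ m * (m+1) := Nat.mul_le_mul_right _ hm
    exact h ⟨m, m+1, m*(m+1), by omega, by omega, by positivity, by omega, by omega, by omega,
      key4 _ _ _ _ hn0 (by omega) (by omega) (by positivity) (by ring)⟩
  by_cases h3 : n % 3 = 0
  · -- n = 3m: (m, n+1, n*(n+1))
    exfalso
    obtain ⟨m, rfl⟩ : ∃ m, n = 3 * m := ⟨n / 3, by omega⟩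
    have hmul : 2 * (3*m+1) ≤ 3*m * (3*m+1) := Nat.mul_le_mul_right _ (by omega)
    exact h ⟨m, 3*m+1, 3*m*(3*m+1), by omega, by omega, by positivity, by omega, by omega,
      by omega,
      key4 _ _ _ _ hn0 (by omega) (by omega) (by positivity) (by ring)⟩
  by_cases h32 : n % 3 = 2
  · -- n = 3m+2: (n, m+1, n*(m+1))
    exfalso
    obtain ⟨m, rfl⟩ : ∃ m, n = 3 * m + 2 := ⟨n / 3, by omega⟩
    have hmul : 2 * (m+1) ≤ (3*m+2) * (m+1) := Nat.mul_le_mul_right _ (by omega)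
    have hmul2 : (3*m+2) * 2 ≤ (3*m+2) * (m+1) := Nat.mul_le_mul_left _ (by omega)
    exact h ⟨3*m+2, m+1, (3*m+2)*(m+1), by omega, by omega, by positivity, by omega, by omega,
      by omega,
      key4 _ _ _ _ hn0 (by omega) (by omega) (by positivity) (by ring)⟩
  by_cases h4 : n % 4 = 3
  · -- n = 4k+3, k ≥ 1 here (3 handled above): (k+2, (k+1)*(k+2), n*(k+1))
    exfalso
    obtain ⟨k, rfl⟩ : ∃ k, n = 4 * k + 3 := ⟨n / 4, by omega⟩
    have hk : 1 ≤ k := by omega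
    have hm1 : 2 * (k+2) ≤ (k+1) * (k+2) := Nat.mul_le_mul_right _ (by omega)
    have hm2 : (k+1) * (k+2) < (4*k+3) * (k+1) := by nlinarith
    exact h ⟨k+2, (k+1)*(k+2), (4*k+3)*(k+1), by omega, by positivity, by positivity,
      by omega, by nlinarith, by nlinarith,
      key4 _ _ _ _ hn0 (by omega) (by positivity) (by positivity) (by ring)⟩
  by_cases h8 : n % 8 = 5
  · -- n = 8t+5: (2t+2, n*(t+1), 2*n*(t+1))
    exfalso
    obtain ⟨t, rfl⟩ : ∃ t, n = 8 * t + 5 := ⟨n / 8, by omega⟩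
    have hm1 : 2 * (t+1) < (8*t+5) * (t+1) := by nlinarith
    have hm2 : (8*t+5)*(t+1) < 2*((8*t+5)*(t+1)) := by nlinarith
    exact h ⟨2*t+2, (8*t+5)*(t+1), 2*((8*t+5)*(t+1)), by omega, by positivity, by positivity,
      by omega, by omega, by omega,
      key4 _ _ _ _ hn0 (by omega) (by positivity) (by positivity) (by ring)⟩
  · omega
end

section
/- Let n be a natural number with n ≡ 7 (mod 12) (equivalently, n ≡ 1 (mod 6) with (n−1)/6 odd). Then x₁ = (n+5)/4, x₂ = (n+1)(n+5)/16, and x₃ = n(n+1)/4 are pairwise distinct positive integers satisfying 4/n = 1/x₁ + 1/x₂ + 1/x₃. -/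
theorem stmt_8 (n : ℕ) (hmod : n % 12 = 7) :
    0 < (n + 5) / 4 ∧ 0 < (n + 1) * (n + 5) / 16 ∧ 0 < n * (n + 1) / 4 ∧
    (n + 5) / 4 ≠ (n + 1) * (n + 5) / 16 ∧
    (n + 1) * (n + 5) / 16 ≠ n * (n + 1) / 4 ∧
    (n + 5) / 4 ≠ n * (n + 1) / 4 ∧
    (4 : ℚ) / n = 1 / ((n + 5) / 4 : ℕ) + 1 / ((n + 1) * (n + 5) / 16 : ℕ) +
      1 / (n * (n + 1) / 4 : ℕ) := by
  obtain ⟨k, rfl⟩ : ∃ k, n = 12 * k + 7 := ⟨n / 12, by omega⟩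
  have h1 : (12 * k + 7 + 5) / 4 = 3 * k + 3 := by omega
  have h2 : (12 * k + 7 + 1) * (12 * k + 7 + 5) / 16 = (3 * k + 2) * (3 * k + 3) := by
    have : (12 * k + 7 + 1) * (12 * k + 7 + 5) = 16 * ((3 * k + 2) * (3 * k + 3)) := by ring
    rw [this, Nat.mul_div_cancel_left _ (by norm_num)]
  have h3 : (12 * k + 7) * (12 * k + 7 + 1) / 4 = (12 * k + 7) * (3 * k + 2) := by
    have : (12 * k + 7) * (12 * k + 7 + 1) = 4 * ((12 * k + 7) * (3 * k + 2)) := by ring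
    rw [this, Nat.mul_div_cancel_left _ (by norm_num)]
  rw [h1, h2, h3]
  refine ⟨by positivity, by positivity, by positivity, by nlinarith, by nlinarith, by nlinarith, ?_⟩
  have hk : (0:ℚ) < (k:ℚ) + 1 := by positivity
  push_cast
  field_simp
  ring
end

section
/- Let n be an odd positive integer having no divisor congruent to 3 modulo 4, let δ be a divisor of n, and suppose there exist positive integers a, t and an odd positive integer k such that δ + k = a·(4t − 1) and k divides a·t·n. Then x₁ = a·t·n/k, x₂ = a·t·(n/δ), and x₃ = t·n are pairwise distinct positive integers satisfying 4/n = 1/x₁ + 1/x₂ + 1/x₃. -/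
/-! With `N = a t n`, the three denominators are `N / k`, `N / δ` and `N / a`, so the reciprocals
sum to `(k + δ + a) / N = 4 a t / (a t n) = 4 / n`. They are distinct because `k`, `δ`, `a` are:
`δ` and `k` are odd while `k + δ + a = 4 a t`, so `a` is even and equals neither of them; and
`k = δ` would give `4 t - 1 ∣ 2 δ`, so the divisor `4 t - 1 ≡ 3 (mod 4)` of `δ` would divide `n`. -/

namespace Nat

lemma div_pos_of_dvd {N d : ℕ} (hN : 0 < N) (h : d ∣ N) : 0 < N / d :=
  Nat.div_pos (Nat.le_of_dvd hN h) (Nat.pos_of_dvd_of_pos h hN)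

lemma div_ne_div_of_dvd {N d₁ d₂ : ℕ} (hN : N ≠ 0) (h₁ : d₁ ∣ N) (h₂ : d₂ ∣ N) (hne : d₁ ≠ d₂) :
    N / d₁ ≠ N / d₂ := fun h ↦ hne <| by
  rw [← Nat.div_div_self h₁ hN, h, Nat.div_div_self h₂ hN]

lemma not_dvd_two_mul_of_mod_four_eq_three {δ m : ℕ} (hδ : ∀ d, d ∣ δ → d % 4 ≠ 3)
    (hm : m % 4 = 3) : ¬ m ∣ 2 * δ := fun h ↦
  have hm_odd : m.Coprime 2 := Nat.coprime_two_right.mpr (Nat.odd_iff.mpr (by omega))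
  hδ m (hm_odd.dvd_of_dvd_mul_left h) hm

end Nat

lemma one_div_natCast_div {K : Type*} [DivisionRing K] [CharZero K] {N d : ℕ} (h : d ∣ N) :
    (1 : K) / (N / d : ℕ) = d / N := by
  rcases eq_or_ne d 0 with rfl | hd
  · simp [zero_dvd_iff.mp h]
  · rw [Nat.cast_div h (Nat.cast_ne_zero.mpr hd), one_div_div]

lemma one_div_add_one_div_add_one_div_natCast_div {K : Type*} [DivisionRing K] [CharZero K]
    {N d₁ d₂ d₃ : ℕ} (h₁ : d₁ ∣ N) (h₂ : d₂ ∣ N) (h₃ : d₃ ∣ N) :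
    (1 : K) / (N / d₁ : ℕ) + 1 / (N / d₂ : ℕ) + 1 / (N / d₃ : ℕ) = (d₁ + d₂ + d₃) / N := by
  rw [one_div_natCast_div h₁, one_div_natCast_div h₂, one_div_natCast_div h₃, ← add_div,
    ← add_div]

theorem stmt_11_general (n δ a t k : ℕ) (hn : 0 < n) (hodd : Odd n)
    (hnodiv : ∀ m : ℕ, m ∣ n → m % 4 ≠ 3)
    (hδ : δ ∣ n) (ha : 0 < a) (ht : 0 < t) (hkodd : Odd k)
    (hsum : δ + k = a * (4 * t - 1)) (hkdvd : k ∣ a * t * n) :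
    0 < a * t * n / k ∧ 0 < a * t * (n / δ) ∧ 0 < t * n ∧
    a * t * n / k ≠ a * t * (n / δ) ∧
    a * t * (n / δ) ≠ t * n ∧
    a * t * n / k ≠ t * n ∧
    (4 : ℚ) / n = 1 / (a * t * n / k : ℕ) + 1 / (a * t * (n / δ) : ℕ) + 1 / (t * n : ℕ) := by
  have hkey : k + δ + a = 4 * (a * t) := by
    have : a * (4 * t - 1) + a = 4 * (a * t) := by
      rw [Nat.mul_sub_one, Nat.sub_add_cancel (Nat.le_mul_of_pos_right _ (by omega))]; ring
    omega
  have hδ_odd : Odd δ := hodd.of_dvd_nat hδ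
  have hk_ne_δ : k ≠ δ := fun h ↦
    Nat.not_dvd_two_mul_of_mod_four_eq_three (fun d hd ↦ hnodiv d (hd.trans hδ))
      (by omega : (4 * t - 1) % 4 = 3) (Dvd.intro_left a (by omega))
  have hδ_ne_a : δ ≠ a := by rw [Nat.odd_iff] at hδ_odd hkodd; omega
  have hk_ne_a : k ≠ a := by rw [Nat.odd_iff] at hδ_odd hkodd; omega
  set N := a * t * n with hN_def
  have hN : 0 < N := by positivity
  have hδN : δ ∣ N := hδ.mul_left _
  have haN : a ∣ N := ⟨t * n, by ring⟩
  have hx₃ : t * n = N / a := by rw [hN_def, mul_assoc, Nat.mul_div_cancel_left _ ha]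
  rw [← Nat.mul_div_assoc _ hδ, hx₃]
  refine ⟨Nat.div_pos_of_dvd hN hkdvd, Nat.div_pos_of_dvd hN hδN, Nat.div_pos_of_dvd hN haN,
    Nat.div_ne_div_of_dvd hN.ne' hkdvd hδN hk_ne_δ, Nat.div_ne_div_of_dvd hN.ne' hδN haN hδ_ne_a,
    Nat.div_ne_div_of_dvd hN.ne' hkdvd haN hk_ne_a, ?_⟩
  rw [one_div_add_one_div_add_one_div_natCast_div hkdvd hδN haN]
  have hkeyℚ : (k + δ + a : ℚ) = 4 * (a * t) := by exact_mod_cast hkey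
  rw [hkeyℚ, hN_def]
  push_cast
  field_simp

theorem stmt_11 (n δ a t k : ℕ) (hn : 0 < n) (hodd : Odd n)
    (hnodiv : ∀ m : ℕ, m ∣ n → m % 4 ≠ 3)
    (hδ : δ ∣ n) (ha : 0 < a) (ht : 0 < t) (hk : 0 < k) (hkodd : Odd k)
    (hsum : δ + k = a * (4 * t - 1)) (hkdvd : k ∣ a * t * n) :
    0 < a * t * n / k ∧ 0 < a * t * (n / δ) ∧ 0 < t * n ∧
    a * t * n / k ≠ a * t * (n / δ) ∧
    a * t * (n / δ) ≠ t * n ∧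
    a * t * n / k ≠ t * n ∧
    (4 : ℚ) / n = 1 / (a * t * n / k : ℕ) + 1 / (a * t * (n / δ) : ℕ) + 1 / (t * n : ℕ) :=
  stmt_11_general n δ a t k hn hodd hnodiv hδ ha ht hkodd hsum hkdvd
end

section
/- Let n, δ, k, a, t be positive integers such that δ divides n, k divides a·t·n, and δ + k = a·(4t − 1). Then x₁ = a·t·n/k, x₂ = a·t·(n/δ), and x₃ = t·n are positive integers satisfying the identity 4/n = 1/x₁ + 1/x₂ + 1/x₃. -/
/-! Over the common denominator `atn` the three unit fractions have numerators `k`, `δ` and `a`,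
so their sum is `(δ + k + a)/(atn) = 4at/(atn) = 4/n`. -/

theorem four_div_eq_one_div_add_one_div_add_one_div {K : Type*} [Field K] {n δ a t k : K}
    (hn : n ≠ 0) (ha : a ≠ 0) (ht : t ≠ 0) (hsum : δ + k = a * (4 * t - 1)) :
    4 / n = 1 / (a * t * n / k) + 1 / (a * t * (n / δ)) + 1 / (t * n) := by
  have hsplit : 1 / (a * t * n / k) + 1 / (a * t * (n / δ)) = (δ + k) / (a * t * n) := by
    rw [one_div_div, ← mul_div_assoc, one_div, inv_div, ← add_div, add_comm]
  rw [hsplit, hsum]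
  field_simp
  ring

theorem stmt_12_general (n δ a t k : ℕ) (hn : 0 < n)
    (hδ : δ ∣ n) (hkdvd : k ∣ a * t * n)
    (hsum : δ + k = a * (4 * t - 1)) :
    0 < a * t * n / k ∧ 0 < a * t * (n / δ) ∧ 0 < t * n ∧
    (4 : ℚ) / n = 1 / (a * t * n / k : ℕ) + 1 / (a * t * (n / δ) : ℕ) + 1 / (t * n : ℕ) := by
  have hδpos : 0 < δ := Nat.pos_of_dvd_of_pos hδ hn
  obtain ⟨ha, hfactor⟩ : 0 < a ∧ 0 < 4 * t - 1 := CanonicallyOrderedAdd.mul_pos.mp (by omega)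
  have ht : 0 < t := by omega
  have hatn : 0 < a * t * n := by positivity
  have hk : 0 < k := Nat.pos_of_dvd_of_pos hkdvd hatn
  refine ⟨Nat.div_pos (Nat.le_of_dvd hatn hkdvd) hk,
    Nat.mul_pos (by positivity) (Nat.div_pos (Nat.le_of_dvd hn hδ) hδpos), by positivity, ?_⟩
  have hsumℚ : (δ + k : ℚ) = a * (4 * t - 1) := by
    rw [← Nat.cast_ofNat, ← Nat.cast_mul, ← Nat.cast_one, ← Nat.cast_sub (by omega)]
    exact_mod_cast hsum
  rw [Nat.cast_div hkdvd (by positivity), Nat.cast_mul _ (n / δ), Nat.cast_div hδ (by positivity)]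
  push_cast
  exact four_div_eq_one_div_add_one_div_add_one_div (by positivity) (by positivity) (by positivity) hsumℚ

theorem stmt_12 (n δ a t k : ℕ) (hn : 0 < n) (hδpos : 0 < δ)
    (ha : 0 < a) (ht : 0 < t) (hk : 0 < k)
    (hδ : δ ∣ n) (hkdvd : k ∣ a * t * n)
    (hsum : δ + k = a * (4 * t - 1)) :
    0 < a * t * n / k ∧ 0 < a * t * (n / δ) ∧ 0 < t * n ∧
    (4 : ℚ) / n = 1 / (a * t * n / k : ℕ) + 1 / (a * t * (n / δ) : ℕ) + 1 / (t * n : ℕ) :=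
  stmt_12_general n δ a t k hn hδ hkdvd hsum
end

section
/- Let n be an odd positive integer having no divisor congruent to 3 modulo 4, and suppose there exist divisors δ and d of n such that δ + d has a divisor m with m ≡ 3 (mod 4). Then there exist pairwise distinct positive integers x₁, x₂, x₃ such that 4/n = 1/x₁ + 1/x₂ + 1/x₃. -/
/-!
Write `δ + d = m t` and `m + 1 = 4 q`, and put `N = q t n`. Then `δ`, `d`, `t` divide `N` and
`δ + d + t = (m + 1) t = 4 q t`, so
`4 / n = (δ + d + t) / N = 1 / (N / δ) + 1 / (N / d) + 1 / (N / t)`.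
Since every divisor of `n` is `1 mod 4`, `δ + d ≡ 2` and `m ≡ -1 (mod 4)` force `t ≡ 2 (mod 4)`,
so `t` differs from `δ` and `d`; and `δ = d` would give `m ∣ 2 δ`, hence `m ∣ δ ∣ n`.
-/

lemma Nat.mod_four_eq_one_of_dvd_of_odd {n e : ℕ} (hn : Odd n)
    (hnodiv : ∀ m : ℕ, m ∣ n → m % 4 ≠ 3) (he : e ∣ n) : e % 4 = 1 := by
  have h3 := hnodiv e he
  have h2 := Nat.odd_iff.mp (hn.of_dvd_nat he)
  omega

lemma Nat.one_div_cast_div {N u : ℕ} (hu : u ∣ N) : (1 : ℚ) / ((N / u : ℕ) : ℚ) = u / N := by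
  rcases eq_or_ne u 0 with rfl | hu0
  · simp
  · rw [Nat.cast_div hu (Nat.cast_ne_zero.mpr hu0), one_div_div]

lemma Nat.exists_egyptian_of_dvd {N u v w : ℕ} (hN : N ≠ 0) (hu : u ∣ N) (hv : v ∣ N) (hw : w ∣ N)
    (huv : u ≠ v) (hvw : v ≠ w) (huw : u ≠ w) :
    ∃ x₁ x₂ x₃ : ℕ, 0 < x₁ ∧ 0 < x₂ ∧ 0 < x₃ ∧ x₁ ≠ x₂ ∧ x₂ ≠ x₃ ∧ x₁ ≠ x₃ ∧
      ((u + v + w : ℕ) : ℚ) / N = 1 / x₁ + 1 / x₂ + 1 / x₃ := by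
  have hpos {e : ℕ} (he : e ∣ N) : 0 < N / e :=
    Nat.pos_of_ne_zero fun h => hN (Nat.eq_zero_of_dvd_of_div_eq_zero he h)
  refine ⟨N / u, N / v, N / w, hpos hu, hpos hv, hpos hw,
    fun h => huv ((Nat.div_eq_iff_eq_of_dvd_dvd hN hu hv).mp h),
    fun h => hvw ((Nat.div_eq_iff_eq_of_dvd_dvd hN hv hw).mp h),
    fun h => huw ((Nat.div_eq_iff_eq_of_dvd_dvd hN hu hw).mp h), ?_⟩
  rw [Nat.one_div_cast_div hu, Nat.one_div_cast_div hv, Nat.one_div_cast_div hw]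
  push_cast
  ring

theorem stmt_13_general (n : ℕ) (hodd : Odd n)
    (hnodiv : ∀ m : ℕ, m ∣ n → m % 4 ≠ 3)
    (h : ∃ δ d : ℕ, δ ∣ n ∧ d ∣ n ∧ ∃ m : ℕ, m % 4 = 3 ∧ m ∣ δ + d) :
    ∃ x₁ x₂ x₃ : ℕ, 0 < x₁ ∧ 0 < x₂ ∧ 0 < x₃ ∧
      x₁ ≠ x₂ ∧ x₂ ≠ x₃ ∧ x₁ ≠ x₃ ∧
      (4 : ℚ) / n = 1 / x₁ + 1 / x₂ + 1 / x₃ := by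
  obtain ⟨δ, d, hδ, hd, m, hm, t, ht⟩ := h
  obtain ⟨q, hq⟩ : 4 ∣ m + 1 := by omega
  have hδ1 := Nat.mod_four_eq_one_of_dvd_of_odd hodd hnodiv hδ
  have hd1 := Nat.mod_four_eq_one_of_dvd_of_odd hodd hnodiv hd
  have ht2 : t % 4 = 2 := by
    have := Nat.mul_mod m t 4
    rw [hm] at this
    omega
  have hδd : δ ≠ d := by
    rintro rfl
    have hmδ : m ∣ 2 * δ := two_mul δ ▸ ht ▸ dvd_mul_right m t
    have hm2 : m.Coprime 2 := Nat.coprime_two_right.mpr (Nat.odd_iff.mpr (by omega))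
    exact hnodiv m ((hm2.dvd_of_dvd_mul_left hmδ).trans hδ) hm
  have hq0 : q ≠ 0 := by omega
  have ht0 : t ≠ 0 := by omega
  have hn0 : n ≠ 0 := hodd.pos.ne'
  have hsum : ((δ + d + t : ℕ) : ℚ) / (q * t * n : ℕ) = 4 / n := by
    have hsumN : δ + d + t = 4 * q * t := by rw [ht, ← hq]; ring
    rw [hsumN]
    push_cast
    field_simp
  rw [← hsum]
  exact Nat.exists_egyptian_of_dvd (by positivity) (hδ.mul_left _) (hd.mul_left _)
    ((dvd_mul_left t q).mul_right n) hδd (by omega) (by omega)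

theorem stmt_13 (n : ℕ) (hn : 0 < n) (hodd : Odd n)
    (hnodiv : ∀ m : ℕ, m ∣ n → m % 4 ≠ 3)
    (h : ∃ δ d : ℕ, δ ∣ n ∧ d ∣ n ∧ ∃ m : ℕ, m % 4 = 3 ∧ m ∣ δ + d) :
    ∃ x₁ x₂ x₃ : ℕ, 0 < x₁ ∧ 0 < x₂ ∧ 0 < x₃ ∧
      x₁ ≠ x₂ ∧ x₂ ≠ x₃ ∧ x₁ ≠ x₃ ∧
      (4 : ℚ) / n = 1 / x₁ + 1 / x₂ + 1 / x₃ :=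
  stmt_13_general n hodd hnodiv h
end

section
/- Let n be an odd positive integer having no divisor congruent to 3 modulo 4, and suppose n has a divisor δ such that δ + 1 ≡ 0 (mod m) for some positive integer m with m ≡ 3 (mod 4). Then there exist pairwise distinct positive integers x₁, x₂, x₃ such that 4/n = 1/x₁ + 1/x₂ + 1/x₃. -/
/-!
If `m ≡ 3 (mod 4)` divides `δ + 1`, write `m + 1 = 4s` and `δ + 1 = mt`; then `δ + t + 1 = 4st`,
which is exactly the identity `4/δ = 1/(st) + 1/(δs) + 1/(δst)`. Oddness of `δ` rules out `t = 1`,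
the only way two of these denominators could coincide. A solution for a divisor `δ` of `n` scales
to one for `n` by multiplying every denominator by `n / δ`.
-/

def HasDistinctErdosStrausSolution (n : ℕ) : Prop :=
  ∃ x₁ x₂ x₃ : ℕ, 0 < x₁ ∧ 0 < x₂ ∧ 0 < x₃ ∧
    x₁ ≠ x₂ ∧ x₂ ≠ x₃ ∧ x₁ ≠ x₃ ∧
    (4 : ℚ) / n = 1 / x₁ + 1 / x₂ + 1 / x₃

theorem HasDistinctErdosStrausSolution.of_dvd {d n : ℕ} (h : HasDistinctErdosStrausSolution d)
    (hdn : d ∣ n) (hn : n ≠ 0) : HasDistinctErdosStrausSolution n := by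
  obtain ⟨e, rfl⟩ := hdn
  have he : 0 < e := Nat.pos_of_ne_zero (right_ne_zero_of_mul hn)
  obtain ⟨x₁, x₂, x₃, h₁, h₂, h₃, h₁₂, h₂₃, h₁₃, hsum⟩ := h
  refine ⟨x₁ * e, x₂ * e, x₃ * e, by positivity, by positivity, by positivity,
    fun h ↦ h₁₂ (Nat.eq_of_mul_eq_mul_right he h), fun h ↦ h₂₃ (Nat.eq_of_mul_eq_mul_right he h),
    fun h ↦ h₁₃ (Nat.eq_of_mul_eq_mul_right he h), ?_⟩
  push_cast
  simp only [← div_div, hsum, add_div]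

theorem four_div_eq_of_add_add_one_eq {K : Type*} [Field K] {d s t : K}
    (hd : d ≠ 0) (hs : s ≠ 0) (ht : t ≠ 0) (h : d + t + 1 = 4 * s * t) :
    4 / d = 1 / (s * t) + 1 / (d * s) + 1 / (d * s * t) := by
  field_simp
  linear_combination -h

theorem hasDistinctErdosStrausSolution_of_dvd_add_one {δ m : ℕ} (hδ : Odd δ) (hm : m % 4 = 3)
    (hmδ : m ∣ δ + 1) : HasDistinctErdosStrausSolution δ := by
  obtain ⟨t, ht⟩ := hmδ
  obtain ⟨s, hs⟩ : 4 ∣ m + 1 := by omega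
  have hδ_pos : 0 < δ := hδ.pos
  have ht_pos : 0 < t := Nat.pos_of_ne_zero (by rintro rfl; simp at ht)
  have hs_pos : 0 < s := by omega
  have hkey : δ + t + 1 = 4 * s * t := by rw [← hs]; linarith [ht]
  have hδ_ne_one : δ ≠ 1 := by rintro rfl; nlinarith
  have ht_ne_δ : t ≠ δ := by rintro rfl; nlinarith
  have ht_ne_one : t ≠ 1 := by
    rintro rfl
    obtain ⟨k, rfl⟩ := hδ
    omega
  refine ⟨s * t, δ * s, δ * s * t, by positivity, by positivity, by positivity, ?_, ?_, ?_, ?_⟩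
  · rw [mul_comm δ s]
    exact fun h ↦ ht_ne_δ (Nat.eq_of_mul_eq_mul_left hs_pos h)
  · exact fun h ↦ ht_ne_one (Nat.eq_of_mul_eq_mul_left (by positivity) ((mul_one _).trans h)).symm
  · rw [mul_comm δ s, mul_right_comm]
    exact fun h ↦ hδ_ne_one (Nat.eq_of_mul_eq_mul_left (by positivity) ((mul_one _).trans h)).symm
  · push_cast
    exact four_div_eq_of_add_add_one_eq (by positivity) (by positivity) (by positivity)
      (by exact_mod_cast hkey)

theorem stmt_14_general (n : ℕ) (hodd : Odd n)
    (h : ∃ δ : ℕ, δ ∣ n ∧ ∃ m : ℕ, 0 < m ∧ m % 4 = 3 ∧ m ∣ δ + 1) :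
    ∃ x₁ x₂ x₃ : ℕ, 0 < x₁ ∧ 0 < x₂ ∧ 0 < x₃ ∧
      x₁ ≠ x₂ ∧ x₂ ≠ x₃ ∧ x₁ ≠ x₃ ∧
      (4 : ℚ) / n = 1 / x₁ + 1 / x₂ + 1 / x₃ := by
  obtain ⟨δ, hδn, m, -, hm, hmδ⟩ := h
  exact (hasDistinctErdosStrausSolution_of_dvd_add_one (hodd.of_dvd_nat hδn) hm hmδ).of_dvd
    hδn hodd.pos.ne'

theorem stmt_14 (n : ℕ) (hn : 0 < n) (hodd : Odd n)
    (hnodiv : ∀ m : ℕ, m ∣ n → m % 4 ≠ 3)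
    (h : ∃ δ : ℕ, δ ∣ n ∧ ∃ m : ℕ, 0 < m ∧ m % 4 = 3 ∧ m ∣ δ + 1) :
    ∃ x₁ x₂ x₃ : ℕ, 0 < x₁ ∧ 0 < x₂ ∧ 0 < x₃ ∧
      x₁ ≠ x₂ ∧ x₂ ≠ x₃ ∧ x₁ ≠ x₃ ∧
      (4 : ℚ) / n = 1 / x₁ + 1 / x₂ + 1 / x₃ :=
  stmt_14_general n hodd h
end
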